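/- Let Z : [0,∞) → [0,1] be continuous with Z(0) = 1, nonincreasing, satisfying the relaxation equation D_g Z(t) = -λ Z(t) for λ > 0, where D_g Z(t) = d/dt ∫₀ᵗ g(t-τ)Z(τ)dτ - g(t)Z(0) and g ∈ L¹_loc(0,∞) is nonnegative. Then for all t > 0, Z(t) ≤ 1 / (1 + λ t / ‖g‖_{L¹(0,t)}). -/

import Mathlib

open Set MeasureTheory intervalIntegral

/-!
Write `G s = ∫₀ˢ g` and `F s = ∫₀ˢ g(s-τ) Z(τ) dτ`. Since `Z ≤ Z 0 = 1` is nonincreasing,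
`H = G - F = g ∗ (1 - Z)` is nondecreasing, and the relaxation equation says `H' = λ Z` almost
everywhere. The integral of the derivative of a monotone function is at most its increment, so
`λ t Z(t) ≤ λ ∫₀ᵗ Z ≤ H(t) ≤ (1 - Z(t)) ∫₀ᵗ g`, which rearranges to the claimed bound.
-/

theorem IntervalIntegrable.mul_monotoneOn {f φ : ℝ → ℝ} {a b : ℝ}
    (hf : IntervalIntegrable f volume a b) (hφ : MonotoneOn φ (uIcc a b)) :
    IntervalIntegrable (fun u => f u * φ u) volume a b := by
  rw [intervalIntegrable_iff] at hf ⊢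
  exact hf.mul_of_top_left ((hφ.memLp_isCompact isCompact_uIcc).mono_measure
    (Measure.restrict_mono uIoc_subset_uIcc le_rfl))

theorem AntitoneOn.sub_mul_le_intervalIntegral {Z : ℝ → ℝ} {a b : ℝ} (hab : a ≤ b)
    (hZ : AntitoneOn Z (Icc a b)) : (b - a) * Z b ≤ ∫ s in a..b, Z s := by
  have hZi : IntervalIntegrable Z volume a b :=
    AntitoneOn.intervalIntegrable (by rwa [uIcc_of_le hab])
  calc (b - a) * Z b = ∫ _ in a..b, Z b := by simp
    _ ≤ ∫ s in a..b, Z s := integral_mono_on hab intervalIntegrable_const hZi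
        fun s hs => hZ hs (right_mem_Icc.2 hab) hs.2

theorem le_one_div_one_add_div {z c G : ℝ} (hz : z ≤ 1) (hc : 0 ≤ c) (hG : 0 ≤ G)
    (h : c * z ≤ (1 - z) * G) : z ≤ 1 / (1 + c / G) := by
  rcases hG.eq_or_lt with rfl | hG
  · simpa using hz
  · rw [one_add_div hG.ne', one_div_div, le_div_iff₀ (by positivity)]
    linarith

section Relaxation

variable {g Z : ℝ → ℝ}

/-- `G - F` in the notation of the header; when `Z 0 = 1` its derivative is `-D_g Z`. -/
noncomputable def relaxationDeficit (g Z : ℝ → ℝ) (s : ℝ) : ℝ :=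
  (∫ u in (0:ℝ)..s, g u) - ∫ τ in (0:ℝ)..s, g (s - τ) * Z τ

theorem intervalIntegrable_mul_comp_sub (hZ : AntitoneOn Z (Ici 0)) {s : ℝ} (hs : 0 ≤ s)
    (hg : IntervalIntegrable g volume 0 s) :
    IntervalIntegrable (fun u => g u * Z (s - u)) volume 0 s := by
  refine hg.mul_monotoneOn fun u hu v hv huv => hZ ?_ ?_ (by linarith)
  all_goals rw [uIcc_of_le hs] at hu hv; exact mem_Ici.2 (by linarith [hu.2, hv.2])

theorem intervalIntegrable_mul_one_sub_comp_sub (hZ : AntitoneOn Z (Ici 0)) {s : ℝ}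
    (hs : 0 ≤ s) (hg : IntervalIntegrable g volume 0 s) :
    IntervalIntegrable (fun u => g u * (1 - Z (s - u))) volume 0 s := by
  simpa only [mul_one_sub] using hg.sub (intervalIntegrable_mul_comp_sub hZ hs hg)

theorem relaxationDeficit_eq_integral (hZ : AntitoneOn Z (Ici 0)) {s : ℝ} (hs : 0 ≤ s)
    (hg : IntervalIntegrable g volume 0 s) :
    relaxationDeficit g Z s = ∫ u in (0:ℝ)..s, g u * (1 - Z (s - u)) := by
  have hconv : ∫ τ in (0:ℝ)..s, g (s - τ) * Z τ = ∫ u in (0:ℝ)..s, g u * Z (s - u) := by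
    simpa using integral_comp_sub_left (a := 0) (b := s) (fun u => g u * Z (s - u)) s
  rw [relaxationDeficit, hconv, ← integral_sub hg (intervalIntegrable_mul_comp_sub hZ hs hg)]
  simp only [mul_one_sub]

theorem monotoneOn_relaxationDeficit (hZ : AntitoneOn Z (Ici 0)) (hZ0 : Z 0 ≤ 1)
    (hg : ∀ u > 0, 0 ≤ g u) {t : ℝ} (hgt : IntervalIntegrable g volume 0 t) :
    MonotoneOn (relaxationDeficit g Z) (Icc 0 t) := by
  intro a ha b hb hab
  have hgb := hgt.mono_set (uIcc_subset_uIcc_left (mem_uIcc_of_le hb.1 hb.2))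
  have hga := hgb.mono_set (uIcc_subset_uIcc_left (mem_uIcc_of_le ha.1 hab))
  have hgab := intervalIntegrable_mul_one_sub_comp_sub hZ hb.1 hgb
  calc relaxationDeficit g Z a = ∫ u in (0:ℝ)..a, g u * (1 - Z (a - u)) :=
        relaxationDeficit_eq_integral hZ ha.1 hga
    _ ≤ ∫ u in (0:ℝ)..a, g u * (1 - Z (b - u)) := by
        refine integral_mono_on_of_le_Ioo ha.1
          (intervalIntegrable_mul_one_sub_comp_sub hZ ha.1 hga)
          (hgab.mono_set (uIcc_subset_uIcc_left (mem_uIcc_of_le ha.1 hab)))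
          fun u hu => mul_le_mul_of_nonneg_left ?_ (hg u hu.1)
        have := hZ (mem_Ici.2 (by linarith [hu.2])) (mem_Ici.2 (by linarith [hu.2]))
          (by linarith : a - u ≤ b - u)
        linarith
    _ ≤ ∫ u in (0:ℝ)..b, g u * (1 - Z (b - u)) := by
        refine integral_mono_interval le_rfl ha.1 hab ?_ hgab
        refine (ae_restrict_iff' measurableSet_Ioc).2 (.of_forall fun u hu => ?_)
        have := hZ (mem_Ici.2 le_rfl) (mem_Ici.2 (by linarith [hu.2]) : b - u ∈ Ici 0)
          (by linarith [hu.2])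
        exact mul_nonneg (hg u hu.1) (by linarith)
    _ = relaxationDeficit g Z b := (relaxationDeficit_eq_integral hZ hb.1 hgb).symm

theorem relaxationDeficit_le (hZ : AntitoneOn Z (Ici 0)) (hg : ∀ u > 0, 0 ≤ g u) {t : ℝ}
    (ht : 0 ≤ t) (hgt : IntervalIntegrable g volume 0 t) :
    relaxationDeficit g Z t ≤ (1 - Z t) * ∫ u in (0:ℝ)..t, g u := by
  rw [relaxationDeficit_eq_integral hZ ht hgt, mul_comm, ← intervalIntegral.integral_mul_const]
  refine integral_mono_on_of_le_Ioo ht (intervalIntegrable_mul_one_sub_comp_sub hZ ht hgt)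
    (hgt.mul_const _) fun u hu => mul_le_mul_of_nonneg_left ?_ (hg u hu.1)
  have := hZ (mem_Ici.2 (by linarith [hu.2])) (mem_Ici.2 ht) (by linarith [hu.1] : t - u ≤ t)
  linarith

theorem ae_deriv_relaxationDeficit {l t : ℝ} (hgt : IntervalIntegrable g volume 0 t)
    (hmono : MonotoneOn (relaxationDeficit g Z) (Icc 0 t)) (hZ0 : Z 0 = 1)
    (heq : ∀ x > 0,
      deriv (fun s => ∫ τ in (0:ℝ)..s, g (s - τ) * Z τ) x - g x * Z 0 = -l * Z x) :
    ∀ᵐ x, x ∈ Ioo 0 t → deriv (relaxationDeficit g Z) x = l * Z x := by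
  filter_upwards [hgt.ae_hasDerivAt_integral, hmono.ae_differentiableWithinAt_of_mem]
    with x hG hH hx
  have hxt : x ∈ Icc 0 t := Ioo_subset_Icc_self hx
  have hG' := hG (by rwa [uIcc_of_le (hx.1.trans hx.2).le]) 0 left_mem_uIcc
  have hH' := (hH hxt).differentiableAt (Icc_mem_nhds hx.1 hx.2)
  have hF : HasDerivAt (fun s => ∫ τ in (0:ℝ)..s, g (s - τ) * Z τ)
      (g x - deriv (relaxationDeficit g Z) x) x :=
    (hG'.sub hH'.hasDerivAt).congr_of_eventuallyEq
      (.of_forall fun s => by simp [relaxationDeficit])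
  have := heq x hx.1
  rw [hF.deriv, hZ0] at this
  linarith

theorem mul_integral_le_relaxationDeficit {l t : ℝ} (hZ : AntitoneOn Z (Ici 0))
    (hg : ∀ u > 0, 0 ≤ g u) (ht : 0 ≤ t) (hgt : IntervalIntegrable g volume 0 t)
    (hZ0 : Z 0 = 1)
    (heq : ∀ x > 0,
      deriv (fun s => ∫ τ in (0:ℝ)..s, g (s - τ) * Z τ) x - g x * Z 0 = -l * Z x) :
    l * ∫ s in (0:ℝ)..t, Z s ≤ relaxationDeficit g Z t := by
  have hmono := monotoneOn_relaxationDeficit hZ hZ0.le hg hgt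
  have hH0 : relaxationDeficit g Z 0 = 0 := by simp [relaxationDeficit]
  have hHt : 0 ≤ relaxationDeficit g Z t :=
    hH0 ▸ hmono (left_mem_Icc.2 ht) (right_mem_Icc.2 ht) ht
  have hderiv := (uIcc_of_le ht ▸ hmono).intervalIntegral_deriv_mem_uIcc
  rw [hH0, sub_zero, uIcc_of_le hHt] at hderiv
  calc l * ∫ s in (0:ℝ)..t, Z s = ∫ x in (0:ℝ)..t, l * Z x :=
        (intervalIntegral.integral_const_mul _ _).symm
    _ = ∫ x in (0:ℝ)..t, deriv (relaxationDeficit g Z) x := by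
        refine integral_congr_ae ?_
        filter_upwards [ae_deriv_relaxationDeficit hgt hmono hZ0 heq, volume.ae_ne t]
          with x hx hxt hxI
        rw [uIoc_of_le ht] at hxI
        exact (hx ⟨hxI.1, lt_of_le_of_ne hxI.2 hxt⟩).symm
    _ ≤ relaxationDeficit g Z t := hderiv.2

end Relaxation

theorem relaxation_solution_decay_general (Z g : ℝ → ℝ) (l : ℝ) (hl : 0 < l)
    (hZ0 : Z 0 = 1)
    (hZmono : AntitoneOn Z (Ici 0))
    (hg : ∀ t > (0:ℝ), 0 ≤ g t)
    (hgint : ∀ t > (0:ℝ), IntegrableOn g (Ioc 0 t))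
    (heq : ∀ t > (0:ℝ),
      deriv (fun s : ℝ => ∫ τ in (0:ℝ)..s, g (s - τ) * Z τ) t - g t * Z 0
        = -l * Z t) :
    ∀ t > (0:ℝ), Z t ≤ 1 / (1 + l * t / ∫ s in (0:ℝ)..t, g s) := by
  intro t ht
  have hgt : IntervalIntegrable g volume 0 t :=
    (intervalIntegrable_iff_integrableOn_Ioc_of_le ht.le).2 (hgint t ht)
  have hZt : Z t ≤ 1 := hZ0 ▸ hZmono (mem_Ici.2 le_rfl) (mem_Ici.2 ht.le) ht.le
  have hG : 0 ≤ ∫ s in (0:ℝ)..t, g s := by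
    rw [integral_of_le ht.le]
    exact setIntegral_nonneg measurableSet_Ioc fun u hu => hg u hu.1
  have hZavg := (hZmono.mono Icc_subset_Ici_self).sub_mul_le_intervalIntegral ht.le
  rw [sub_zero] at hZavg
  refine le_one_div_one_add_div hZt (by positivity) hG ?_
  calc l * t * Z t = l * (t * Z t) := mul_assoc _ _ _
    _ ≤ l * ∫ s in (0:ℝ)..t, Z s := mul_le_mul_of_nonneg_left hZavg hl.le
    _ ≤ relaxationDeficit g Z t := mul_integral_le_relaxationDeficit hZmono hg ht.le hgt hZ0 heq
    _ ≤ (1 - Z t) * ∫ s in (0:ℝ)..t, g s := relaxationDeficit_le hZmono hg ht.le hgt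

/-- Let `Z : [0,∞) → [0,1]` be continuous, nonincreasing, with `Z(0)=1`,
satisfying the relaxation equation `D_g Z = -λZ` for the general Caputo derivative
`D_g Z(t) = d/dt ∫₀ᵗ g(t-τ)Z(τ)dτ - g(t)Z(0)` with nonnegative locally integrable
kernel `g`.  Then `Z(t) ≤ 1/(1 + λt/‖g‖_{L¹(0,t)})` for all `t > 0`. -/
theorem relaxation_solution_decay (Z g : ℝ → ℝ) (l : ℝ) (hl : 0 < l)
    (hZcont : ContinuousOn Z (Ici 0)) (hZ0 : Z 0 = 1)
    (hZrange : ∀ t : ℝ, 0 ≤ t → Z t ∈ Icc (0:ℝ) 1)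
    (hZmono : AntitoneOn Z (Ici 0))
    (hg : ∀ t > (0:ℝ), 0 ≤ g t)
    (hgint : ∀ t > (0:ℝ), IntegrableOn g (Ioc 0 t))
    (heq : ∀ t > (0:ℝ),
      deriv (fun s : ℝ => ∫ τ in (0:ℝ)..s, g (s - τ) * Z τ) t - g t * Z 0
        = -l * Z t) :
    ∀ t > (0:ℝ), Z t ≤ 1 / (1 + l * t / ∫ s in (0:ℝ)..t, g s) :=
  relaxation_solution_decay_general Z g l hl hZ0 hZmono hg hgint heq
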